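/- Let Σ be a graded alphabet and L a finite tree language over Σ. Then the sequential subtree automaton A_L is a sequential RWTA that realizes SubTreeSeries_L, i.e. Card(Δ_{A_L}(t)) ≤ 1 and P_{A_L}(t) = SubTreeSeries_L(t) for every tree t ∈ T_Σ. -/

import Mathlib

/-- A tree over a graded alphabet `σ` with arity function `ar`. -/
inductive GTree (σ : Type) (ar : σ → ℕ) : Type
  | node (f : σ) (ts : Fin (ar f) → GTree σ ar) : GTree σ ar

/-- A root-weighted tree automaton (RWTA) over the graded alphabet `σ`
with weights in `M`. -/
structure RWTA (σ : Type) (ar : σ → ℕ) (M : Type) where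
  Q : Type
  fin : Finite Q := by infer_instance
  ν : Q → M
  δ : ∀ f : σ, (Fin (ar f) → Q) → Q → Prop

attribute [instance] RWTA.fin

variable {σ : Type} {ar : σ → ℕ} {M : Type}

/-- The reachability map `Δ_A`. -/
def RWTA.Delta (A : RWTA σ ar M) : GTree σ ar → Set A.Q
  | .node f ts => {q | ∃ qs : Fin (ar f) → A.Q,
      (∀ i, qs i ∈ A.Delta (ts i)) ∧ A.δ f qs q}

/-- The tree series realized by an RWTA: `P_A(t) = ν(Δ_A(t))`. -/
noncomputable def RWTA.P [AddCommMonoid M] (A : RWTA σ ar M) (t : GTree σ ar) : M :=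
  ∑ᶠ q ∈ A.Delta t, A.ν q

/-- An RWTA is sequential when `Card (Δ_A(t)) ≤ 1` for every tree. -/
def RWTA.Sequential (A : RWTA σ ar M) : Prop :=
  ∀ t : GTree σ ar, (A.Delta t).Subsingleton

/-- The down language of a state. -/
def RWTA.DownLang (A : RWTA σ ar M) (q : A.Q) : Set (GTree σ ar) :=
  {t | q ∈ A.Delta t}

/-- The sequential RWTA associated with `A` by the subset construction. -/
noncomputable def RWTA.subset [AddCommMonoid M] (A : RWTA σ ar M) : RWTA σ ar M where
  Q := Set A.Q
  ν := fun S => ∑ᶠ q ∈ S, A.ν q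
  δ := fun f Qs S =>
    S = {q | ∃ qs : Fin (ar f) → A.Q, (∀ i, qs i ∈ Qs i) ∧ A.δ f qs q}

/-- The accessible part of an RWTA. -/
def RWTA.acc (A : RWTA σ ar M) : RWTA σ ar M where
  Q := {q : A.Q // (A.DownLang q).Nonempty}
  ν := fun q => A.ν q.1
  δ := fun f qs q => A.δ f (fun i => (qs i).1) q.1

/-- The sum of two RWTAs (on the disjoint union of the state sets). -/
def RWTA.sum (A₁ A₂ : RWTA σ ar M) : RWTA σ ar M where
  Q := A₁.Q ⊕ A₂.Q
  ν := Sum.elim A₁.ν A₂.ν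
  δ := fun f qs q =>
    (∃ (qs' : Fin (ar f) → A₁.Q) (q' : A₁.Q),
        q = Sum.inl q' ∧ (∀ i, qs i = Sum.inl (qs' i)) ∧ A₁.δ f qs' q') ∨
    (∃ (qs' : Fin (ar f) → A₂.Q) (q' : A₂.Q),
        q = Sum.inr q' ∧ (∀ i, qs i = Sum.inr (qs' i)) ∧ A₂.δ f qs' q')

/-- The product of two RWTAs. -/
def RWTA.prod [Mul M] (A₁ A₂ : RWTA σ ar M) : RWTA σ ar M where
  Q := A₁.Q × A₂.Q
  ν := fun q => A₁.ν q.1 * A₂.ν q.2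
  δ := fun f qs q =>
    A₁.δ f (fun i => (qs i).1) q.1 ∧ A₂.δ f (fun i => (qs i).2) q.2

/-- The quotient of an RWTA by an equivalence relation on its states. -/
noncomputable def RWTA.quot [AddCommMonoid M] (A : RWTA σ ar M) (s : Setoid A.Q) :
    RWTA σ ar M where
  Q := Quotient s
  ν := fun C => ∑ᶠ q ∈ {q : A.Q | Quotient.mk s q = C}, A.ν q
  δ := fun f Cs C => ∃ (qs : Fin (ar f) → A.Q) (q : A.Q),
    (∀ i, Quotient.mk s (qs i) = Cs i) ∧ Quotient.mk s q = C ∧ A.δ f qs q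

/-- Relabelling of trees along a rank-preserving map of symbols. -/
def GTree.map {Γ : Type} {arΓ : Γ → ℕ} (g : σ → Γ) (hg : ∀ f, arΓ (g f) = ar f) :
    GTree σ ar → GTree Γ arΓ
  | .node f ts => .node (g f) (fun i => GTree.map g hg (ts (Fin.cast (hg f) i)))

/-- A morphism of RWTAs. -/
structure RWTA.Morphism {Γ : Type} {arΓ : Γ → ℕ}
    (A₁ : RWTA σ ar M) (A₂ : RWTA Γ arΓ M) where
  stateMap : A₁.Q → A₂.Q
  symMap : σ → Γ
  symRank : ∀ f, arΓ (symMap f) = ar f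
  transMap : ∀ (f : σ) (qs : Fin (ar f) → A₁.Q) (q : A₁.Q), A₁.δ f qs q →
    A₂.δ (symMap f) (fun i => stateMap (qs (Fin.cast (symRank f) i))) (stateMap q)
  weightMap : ∀ q, A₂.ν (stateMap q) = A₁.ν q

/-- Two RWTAs are isomorphic when there are mutually inverse morphisms between them. -/
def RWTA.Isomorphic {Γ : Type} {arΓ : Γ → ℕ}
    (A₁ : RWTA σ ar M) (A₂ : RWTA Γ arΓ M) : Prop :=
  ∃ (μ : A₁.Morphism A₂) (μ' : A₂.Morphism A₁),
    (∀ q, μ'.stateMap (μ.stateMap q) = q) ∧ (∀ q, μ.stateMap (μ'.stateMap q) = q) ∧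
    (∀ f, μ'.symMap (μ.symMap f) = f) ∧ (∀ f, μ.symMap (μ'.symMap f) = f)

/-- The size (number of nodes) of a tree. -/
def GTree.size : GTree σ ar → ℕ
  | .node _ ts => 1 + ∑ i, (ts i).size

/-- The set of subtrees of a tree. -/
def GTree.subTrees : GTree σ ar → Set (GTree σ ar)
  | .node f ts => insert (.node f ts) (⋃ i, (ts i).subTrees)

theorem GTree.subTrees_finite (t : GTree σ ar) : t.subTrees.Finite := by
  induction t with
  | node f ts ih => exact Set.Finite.insert _ (Set.finite_iUnion fun i => ih i)

-- `t.subCount s` is the number of occurrences of `s` as a subtree of `t`,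
-- i.e. `SubTreeSeries_t(s)`.
open Classical in
noncomputable def GTree.subCount : GTree σ ar → GTree σ ar → ℕ
  | .node f ts, s =>
      (if GTree.node f ts = s then 1 else 0) + ∑ i, (ts i).subCount s

/-- Indexing of the symbols of a tree by their position in a prefix traversal
(auxiliary function, threading the position of the root). -/
def GTree.sharpAux : GTree σ ar → ℕ → GTree (σ × ℕ) (fun p => ar p.1)
  | .node f ts, n => .node (f, n) (fun i =>
      (ts i).sharpAux (n + 1 + ∑ j : Fin (ar f), if j.1 < i.1 then (ts j).size else 0))

/-- `t^♯`: the tree `t` with each symbol indexed by its prefix-traversal position. -/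
def GTree.sharp (t : GTree σ ar) : GTree (σ × ℕ) (fun p => ar p.1) := t.sharpAux 0

/-- The map `h` dropping the indexes. -/
def GTree.unsharp : GTree (σ × ℕ) (fun p => ar p.1) → GTree σ ar :=
  GTree.map Prod.fst (fun _ => rfl)

/-- The subtree automaton `A_t` associated with a tree `t`. -/
def subtreeAut (t : GTree σ ar) : RWTA σ ar ℕ where
  Q := {r // r ∈ t.sharp.subTrees}
  fin := (t.sharp.subTrees_finite).to_subtype
  ν := fun _ => 1
  δ := fun f qs q => ∃ n : ℕ,
    (q : GTree (σ × ℕ) (fun p => ar p.1)) = .node (f, n) (fun i => (qs i : GTree (σ × ℕ) (fun p => ar p.1)))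

/-- The equivalence `∼_h` on the states of the subtree automaton. -/
def simH (t : GTree σ ar) : Setoid (subtreeAut t).Q :=
  Setoid.ker (fun r => GTree.unsharp r.1)

/-- The sequential subtree automaton `seq(A_t)` associated with a tree `t`. -/
noncomputable def seqSubtreeAut (t : GTree σ ar) : RWTA σ ar ℕ where
  Q := {r // r ∈ t.subTrees}
  fin := (t.subTrees_finite).to_subtype
  ν := fun r => t.subCount r.1
  δ := fun f qs q => (q : GTree σ ar) = .node f (fun i => (qs i : GTree σ ar))

/-- `SubTreeSet(L)`. -/
def subTreeSet (L : Set (GTree σ ar)) : Set (GTree σ ar) := ⋃ t ∈ L, t.subTrees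

/-- `SubTreeSeries_L`. -/
noncomputable def subSeriesL (L : Set (GTree σ ar)) (s : GTree σ ar) : ℕ :=
  ∑ᶠ t ∈ L, t.subCount s

/-- The sequential subtree automaton `A_L` associated with a finite tree language. -/
noncomputable def langSubtreeAut (L : Set (GTree σ ar)) (hL : L.Finite) : RWTA σ ar ℕ where
  Q := {r // r ∈ subTreeSet L}
  fin := (hL.biUnion fun t _ => t.subTrees_finite).to_subtype
  ν := fun r => subSeriesL L r.1
  δ := fun f qs q => (q : GTree σ ar) = .node f (fun i => (qs i : GTree σ ar))


/-! By induction on `t`, the only state of `A_L` reachable on `t` is `t` itself, which is a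
state exactly when `t` occurs in `L`. Its weight is `SubTreeSeries_L(t)` by construction, and
a tree that does not occur in `L` has no occurrences to count. -/

namespace GTree

lemma self_mem_subTrees (t : GTree σ ar) : t ∈ t.subTrees := by
  cases t with
  | node f ts => exact Set.mem_insert _ _

lemma subTrees_subset_of_mem {s t : GTree σ ar} (h : s ∈ t.subTrees) :
    s.subTrees ⊆ t.subTrees := by
  induction t with
  | node f ts ih =>
    rcases h with rfl | h
    · exact subset_rfl
    · obtain ⟨i, hi⟩ := Set.mem_iUnion.mp h
      exact (ih i hi).trans
        ((Set.subset_iUnion (fun i => (ts i).subTrees) i).trans (Set.subset_insert _ _))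

lemma child_mem_subTrees (f : σ) (ts : Fin (ar f) → GTree σ ar) (i : Fin (ar f)) :
    ts i ∈ (node f ts).subTrees :=
  Set.mem_insert_of_mem _ (Set.mem_iUnion.mpr ⟨i, (ts i).self_mem_subTrees⟩)

lemma subCount_eq_zero_of_notMem {t s : GTree σ ar} (h : s ∉ t.subTrees) :
    t.subCount s = 0 := by
  induction t with
  | node f ts ih =>
    have hroot : node f ts ≠ s := fun he => h (he ▸ self_mem_subTrees _)
    rw [subCount, if_neg hroot, zero_add]
    exact Finset.sum_eq_zero fun i _ =>
      ih i fun hi => h (Set.mem_insert_of_mem _ (Set.mem_iUnion.mpr ⟨i, hi⟩))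

end GTree

lemma child_mem_subTreeSet {L : Set (GTree σ ar)} {f : σ} {ts : Fin (ar f) → GTree σ ar}
    (h : .node f ts ∈ subTreeSet L) (i : Fin (ar f)) : ts i ∈ subTreeSet L := by
  obtain ⟨t, ht, hsub⟩ := Set.mem_iUnion₂.mp h
  exact Set.mem_iUnion₂.mpr
    ⟨t, ht, GTree.subTrees_subset_of_mem hsub (GTree.child_mem_subTrees f ts i)⟩

lemma subSeriesL_eq_zero_of_notMem {L : Set (GTree σ ar)} {s : GTree σ ar}
    (h : s ∉ subTreeSet L) : subSeriesL L s = 0 :=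
  finsum_mem_eq_zero_of_forall_eq_zero fun t ht =>
    GTree.subCount_eq_zero_of_notMem fun hs => h (Set.mem_iUnion₂.mpr ⟨t, ht, hs⟩)

section langSubtreeAut

variable (L : Set (GTree σ ar)) (hL : L.Finite)

lemma langSubtreeAut_mem_delta_iff (t : GTree σ ar) (q : (langSubtreeAut L hL).Q) :
    q ∈ (langSubtreeAut L hL).Delta t ↔ q.1 = t := by
  induction t generalizing q with
  | node f ts ih =>
    constructor
    · rintro ⟨qs, hqs, hq⟩
      exact hq.trans (congrArg _ (funext fun i => (ih i (qs i)).mp (hqs i)))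
    · intro hq
      have hts : ∀ i, ts i ∈ subTreeSet L := child_mem_subTreeSet (hq ▸ q.2)
      exact ⟨fun i => ⟨ts i, hts i⟩, fun i => (ih i _).mpr rfl, hq⟩

lemma langSubtreeAut_delta_eq (t : GTree σ ar) :
    (langSubtreeAut L hL).Delta t = {q | q.1 = t} :=
  Set.ext (langSubtreeAut_mem_delta_iff L hL t)

lemma langSubtreeAut_sequential : (langSubtreeAut L hL).Sequential := fun t q hq q' hq' => by
  rw [langSubtreeAut_delta_eq] at hq hq'
  exact Subtype.ext (hq.trans hq'.symm)

lemma langSubtreeAut_P (t : GTree σ ar) : (langSubtreeAut L hL).P t = subSeriesL L t := by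
  rw [RWTA.P, langSubtreeAut_delta_eq]
  by_cases ht : t ∈ subTreeSet L
  · let q₀ : (langSubtreeAut L hL).Q := ⟨t, ht⟩
    have hdelta : {q : (langSubtreeAut L hL).Q | q.1 = t} = {q₀} :=
      Set.ext fun q => (Subtype.ext_iff (a1 := q) (a2 := q₀)).symm
    rw [hdelta, finsum_mem_singleton]
    rfl
  · have hdelta : {q : (langSubtreeAut L hL).Q | q.1 = t} = ∅ :=
      Set.eq_empty_of_forall_notMem fun q hq => ht (hq ▸ q.2)
    rw [hdelta, finsum_mem_empty, subSeriesL_eq_zero_of_notMem ht]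

end langSubtreeAut

theorem langSubtreeAut_sequential_realizes {σ : Type} {ar : σ → ℕ}
    (L : Set (GTree σ ar)) (hL : L.Finite) :
    (langSubtreeAut L hL).Sequential ∧
      ∀ t : GTree σ ar, (langSubtreeAut L hL).P t = subSeriesL L t :=
  ⟨langSubtreeAut_sequential L hL, langSubtreeAut_P L hL⟩
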